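/- arXiv:1805.10948 — 6 statements merged into one kernel-verified Lean document; each statement's English description precedes it below -/
import Mathlib

section
/- Let x = (k/l)·(π/2) where k, l are positive integers with k/l ∈ (0,1) and k − l odd. Then the sum over j from 1 to 2l−1 of (−1)^j · cos²(jx) equals −1. -/
/-!
Write `cos² (jx) = (1 + cos (2jx)) / 2`. Since `(-1)^j cos (2jx) = cos (j (π + 2x))` and
`π + 2x = 2π (k + l) / (2l)`, the sum over a full period `0 ≤ j < 2l` splits into the alternating
sum of `1/2`, which vanishes, and the real part of a geometric sum of the `2l`-th root of unity
`exp (2πi (k + l) / (2l))`. This root is `≠ 1` because `0 < k + l < 2l`, so that sum vanishes too.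
Removing the term `j = 0`, which equals `1`, leaves `-1`.
-/

open Real Finset

theorem sum_range_cos_two_pi_mul_div_eq_zero {n m : ℕ} (h : ¬ n ∣ m) :
    ∑ j ∈ range n, cos (2 * π * m * j / n) = 0 := by
  rcases eq_or_ne n 0 with rfl | hn
  · simp
  have hζ := Complex.isPrimitiveRoot_exp n hn
  set η := Complex.exp (2 * π * Complex.I / n) ^ m
  have hη : η ≠ 1 := fun h1 => h ((hζ.pow_eq_one_iff_dvd m).mp h1)
  have hηn : η ^ n = 1 := by rw [pow_right_comm, hζ.pow_eq_one, one_pow]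
  have hsum : ∑ j ∈ range n, η ^ j = 0 := by rw [geom_sum_eq hη, hηn, sub_self, zero_div]
  have hre (j : ℕ) : (η ^ j).re = cos (2 * π * m * j / n) := by
    rw [← pow_mul, ← Complex.exp_nat_mul, ← Complex.exp_ofReal_mul_I_re]
    congr 2
    push_cast
    ring
  simpa [Complex.re_sum, hre] using congrArg Complex.re hsum

theorem neg_one_pow_mul_cos_sq (j : ℕ) (x : ℝ) :
    (-1) ^ j * cos (j * x) ^ 2 = ((-1) ^ j + cos (j * (π + 2 * x))) / 2 := by
  rw [cos_sq, show (j : ℝ) * (π + 2 * x) = 2 * (j * x) + j * π by ring, cos_add_nat_mul_pi]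
  ring

theorem sum_cos_sq_general (k l : ℕ) (hkl : k < l) :
    ∑ j ∈ Finset.Icc 1 (2 * l - 1),
      (-1 : ℝ) ^ j * Real.cos (j * ((k : ℝ) / l * (Real.pi / 2))) ^ 2 = -1 := by
  have hl : (l : ℝ) ≠ 0 := Nat.cast_ne_zero.mpr (by lia)
  have hangle (j : ℕ) : (j : ℝ) * (π + 2 * ((k : ℝ) / l * (π / 2)))
      = 2 * π * ((k + l : ℕ) : ℝ) * j / ((2 * l : ℕ) : ℝ) := by
    push_cast
    field_simp
    ring
  have hdvd : ¬ 2 * l ∣ k + l := Nat.not_dvd_of_pos_of_lt (by lia) (by lia)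
  have hfull : ∑ j ∈ range (2 * l),
      (-1 : ℝ) ^ j * cos (j * ((k : ℝ) / l * (π / 2))) ^ 2 = 0 := by
    simp_rw [neg_one_pow_mul_cos_sq, ← sum_div, sum_add_distrib, hangle,
      sum_range_cos_two_pi_mul_div_eq_zero hdvd, neg_one_geom_sum, if_pos (even_two_mul l)]
    simp
  rw [range_eq_Ico, sum_eq_sum_Ico_succ_bot (by lia),
    ← Icc_sub_one_right_eq_Ico_of_not_isMin (by simp; lia)] at hfull
  simp only [pow_zero, CharP.cast_eq_zero, zero_mul, cos_zero, one_pow, mul_one, zero_add] at hfull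
  linarith

theorem sum_cos_sq (k l : ℕ) (hk : 0 < k) (hkl : k < l) (hpar : Odd (k + l)) :
    ∑ j ∈ Finset.Icc 1 (2 * l - 1),
      (-1 : ℝ) ^ j * Real.cos (j * ((k : ℝ) / l * (Real.pi / 2))) ^ 2 = -1 :=
  sum_cos_sq_general k l hkl
end

section
/- Let b = 2 sin((k/l)·(π/2)) with k, l positive integers of opposite parity, k/l ∈ (0,1), and let C be the 4l × 4l symmetric Toeplitz matrix with entries C(i,j) = γ(|i−j|), where γ is the symmetric solution of γ(m+1) = bγ(m) − γ(m−1), γ(0)=1. Then the rank of C is at most 2. -/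
/-!
Read in the row index, each column `n ↦ γ (n - j)` of `C` solves the order-two recurrence
`u (n + 2) = b * u (n + 1) - u n`. Its solutions form a two-dimensional space, so `C` factors
through `ℝ²`: `C = A * B` with `A` listing the two basic solutions and `B` the initial values
of the columns.
-/

namespace LinearRecurrence

variable {R : Type*} [CommSemiring R] (E : LinearRecurrence R)

theorem eq_sum_mul_basis {u : ℕ → R} (hu : E.IsSolution u) (n : ℕ) :
    u n = ∑ t : Fin E.order, u t * (E.basis t : ℕ → R) n := by
  have h := congrArg (fun v : E.solSpace => (v : ℕ → R) n) (E.basis.sum_repr ⟨u, hu⟩)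
  simpa [Submodule.coe_sum, Finset.sum_apply, mul_comm] using h.symm

theorem rank_of_isSolution_le [StrongRankCondition R] {N : ℕ} {ι : Type*} [Fintype ι]
    (u : ι → ℕ → R) (hu : ∀ j, E.IsSolution (u j)) :
    (Matrix.of fun (i : Fin N) j => u j i).rank ≤ E.order := by
  have hfactor : (Matrix.of fun (i : Fin N) j => u j i) =
      Matrix.of (fun (i : Fin N) t => (E.basis t : ℕ → R) i) *
        Matrix.of (fun (t : Fin E.order) j => u j t) := by
    ext i j
    simp [Matrix.mul_apply, E.eq_sum_mul_basis (hu j) i, mul_comm]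
  rw [hfactor]
  exact (Matrix.rank_mul_le_left _ _).trans (Matrix.rank_le_width _)

end LinearRecurrence

theorem toeplitz_rank_le_two_general (l : ℕ)
    (b : ℝ)
    (γ : ℤ → ℝ)
    (hrec : ∀ m : ℤ, γ (m + 1) = b * γ m - γ (m - 1))
    (C : Matrix (Fin (4 * l)) (Fin (4 * l)) ℝ)
    (hC : ∀ i j : Fin (4 * l), C i j = γ ((i : ℤ) - (j : ℤ))) :
    C.rank ≤ 2 := by
  let E : LinearRecurrence ℝ := ⟨2, ![-1, b]⟩
  let column (j : Fin (4 * l)) (n : ℕ) : ℝ := γ (n - j)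
  have hcolumn : ∀ j, E.IsSolution (column j) := by
    intro j n
    have h := hrec (n + 1 - j)
    simp only [E, column, Fin.sum_univ_two, Matrix.cons_val_zero, Matrix.cons_val_one]
    push_cast
    rw [show (n : ℤ) + 2 - j = n + 1 - j + 1 by ring, h, show (n : ℤ) + 1 - j - 1 = n - j by ring]
    simp only [Fin.val_zero, Fin.val_one, Nat.cast_zero, Nat.cast_one, add_zero]
    ring
  have hCcol : C = Matrix.of fun (i : Fin (4 * l)) j => column j i := Matrix.ext hC
  rw [hCcol]
  exact E.rank_of_isSolution_le column hcolumn

theorem toeplitz_rank_le_two (k l : ℕ) (hk : 0 < k) (hkl : k < l) (hpar : Odd (k + l))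
    (b : ℝ) (hb : b = 2 * Real.sin ((k : ℝ) / l * (Real.pi / 2)))
    (γ : ℤ → ℝ)
    (hrec : ∀ m : ℤ, γ (m + 1) = b * γ m - γ (m - 1))
    (hsym : ∀ m : ℤ, γ (-m) = γ m)
    (h0 : γ 0 = 1)
    (C : Matrix (Fin (4 * l)) (Fin (4 * l)) ℝ)
    (hC : ∀ i j : Fin (4 * l), C i j = γ ((i : ℤ) - (j : ℤ))) :
    C.rank ≤ 2 :=
  toeplitz_rank_le_two_general l b γ hrec C hC
end

section
/- Under the same setup, the squared Frobenius norm of the 4l × 4l Toeplitz matrix C with entries γ(|i−j|) equals 8l². -/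
/-!
With `θ = π/2 - x` we have `b = 2 cos θ`, and `m ↦ cos (m θ)` solves the same three-term
recurrence as `γ` with the same initial values (`γ 1 = b / 2` by symmetry), so `γ m = cos (m θ)`.
Then `C i j ^ 2 = 1/2 + cos (2 (i - j) θ) / 2`, and since `2 l θ = (l - k) π` is an odd multiple
of `π`, the cosine term is antiperiodic in `j` with antiperiod `l`, so it sums to zero over the
`4 l` columns. Every row therefore contributes `2 l`.
-/

open Finset Function Real

namespace Function.Antiperiodic

variable {M : Type*} [AddCommGroup M] {f : ℕ → M} {c : ℕ}

theorem sum_range_two_mul_eq_zero (hf : Antiperiodic f c) : ∑ j ∈ range (2 * c), f j = 0 := by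
  rw [two_mul, sum_range_add]
  simp only [add_comm c, hf _, sum_neg_distrib, add_neg_cancel]

theorem sum_range_two_mul_mul_eq_zero (hf : Antiperiodic f c) (n : ℕ) :
    ∑ j ∈ range (2 * c * n), f j = 0 := by
  induction n with
  | zero => simp
  | succ n ih =>
    have hshift : Antiperiodic (fun x => f (2 * c * n + x)) c := fun x => by
      simp only [← add_assoc, hf _]
    rw [mul_add_one, sum_range_add, ih, hshift.sum_range_two_mul_eq_zero, add_zero]

end Function.Antiperiodic

theorem eq_of_three_term_recurrence {R : Type*} [Ring R] {u v : ℤ → R} (b : R)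
    (hu : ∀ m, u (m + 1) = b * u m - u (m - 1)) (hv : ∀ m, v (m + 1) = b * v m - v (m - 1))
    (h0 : u 0 = v 0) (h1 : u 1 = v 1) : u = v := by
  have backward : ∀ w : ℤ → R, (∀ m, w (m + 1) = b * w m - w (m - 1)) →
      ∀ m, w (m - 1) = b * w m - w (m + 1) := fun w hw m => by rw [hw]; abel
  suffices ∀ m : ℤ, u m = v m ∧ u (m + 1) = v (m + 1) from funext fun m => (this m).1
  intro m
  induction m using Int.induction_on with
  | zero => exact ⟨h0, h1⟩
  | succ m ih => exact ⟨ih.2, by rw [hu, hv, add_sub_cancel_right, ih.1, ih.2]⟩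
  | pred m ih =>
    exact ⟨by rw [backward u hu, backward v hv, ih.1, ih.2], by rw [sub_add_cancel]; exact ih.1⟩

theorem Real.cos_int_mul_recurrence (θ : ℝ) (m : ℤ) :
    cos (((m + 1 : ℤ) : ℝ) * θ) = 2 * cos θ * cos (m * θ) - cos (((m - 1 : ℤ) : ℝ) * θ) := by
  push_cast
  rw [add_mul, sub_mul, one_mul, cos_add, cos_sub]
  ring

theorem eq_cos_int_mul_of_recurrence {γ : ℤ → ℝ} {θ : ℝ}
    (hrec : ∀ m, γ (m + 1) = 2 * cos θ * γ m - γ (m - 1)) (hsym : ∀ m, γ (-m) = γ m)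
    (h0 : γ 0 = 1) : γ = fun m : ℤ => cos (m * θ) := by
  have h1 : γ 1 = cos θ := by
    have := hrec 0
    rw [zero_sub, hsym, zero_add, h0] at this
    linarith
  exact eq_of_three_term_recurrence (v := fun m : ℤ => cos (m * θ)) _ hrec
    (cos_int_mul_recurrence θ) (by simp [h0]) (by simp [h1])

theorem sum_range_cos_sub_mul_sq {l : ℕ} {θ : ℝ} (hθ : Antiperiodic cos (2 * l * θ)) (a : ℝ)
    (n : ℕ) : ∑ j ∈ range (2 * l * n), cos (a - j * θ) ^ 2 = l * n := by
  have hanti : Antiperiodic (fun j : ℕ => cos (2 * a - 2 * j * θ)) l := fun j => by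
    rw [← hθ.sub_eq]
    push_cast
    ring_nf
  calc ∑ j ∈ range (2 * l * n), cos (a - j * θ) ^ 2
      = ∑ j ∈ range (2 * l * n), (1 / 2 + cos (2 * a - 2 * j * θ) / 2) :=
        sum_congr rfl fun j _ => by rw [cos_sq]; ring_nf
    _ = l * n := by
        simp only [sum_add_distrib, ← sum_div, hanti.sum_range_two_mul_mul_eq_zero, sum_const,
          card_range, nsmul_eq_mul, zero_div, add_zero]
        push_cast
        ring

theorem toeplitz_frobenius_general (k l : ℕ) (hkl : k < l) (hpar : Odd (k + l))
    (b : ℝ) (hb : b = 2 * Real.sin ((k : ℝ) / l * (Real.pi / 2)))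
    (γ : ℤ → ℝ)
    (hrec : ∀ m : ℤ, γ (m + 1) = b * γ m - γ (m - 1))
    (hsym : ∀ m : ℤ, γ (-m) = γ m)
    (h0 : γ 0 = 1)
    (C : Matrix (Fin (4 * l)) (Fin (4 * l)) ℝ)
    (hC : ∀ i j : Fin (4 * l), C i j = γ ((i : ℤ) - (j : ℤ))) :
    ∑ i : Fin (4 * l), ∑ j : Fin (4 * l), (C i j) ^ 2 = 8 * (l : ℝ) ^ 2 := by
  set θ := π / 2 - k / l * (π / 2) with hθ_def
  have hγ : γ = fun m : ℤ => cos (m * θ) :=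
    eq_cos_int_mul_of_recurrence (by rwa [hb, ← cos_pi_div_two_sub] at hrec) hsym h0
  have hθ : Antiperiodic cos (2 * l * θ) := by
    obtain ⟨r, hr⟩ := hpar
    have hl : (l : ℝ) ≠ 0 := Nat.cast_ne_zero.2 (by omega)
    have hr' : (k : ℝ) + l = 2 * r + 1 := by exact_mod_cast hr
    have h2lθ : 2 * l * θ = (((r : ℤ) - k : ℤ) : ℝ) * (2 * π) + π := by
      rw [hθ_def]
      field_simp
      push_cast
      linear_combination hr'
    rw [h2lθ]
    exact cos_antiperiodic.int_odd_mul_antiperiodic _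
  calc ∑ i : Fin (4 * l), ∑ j : Fin (4 * l), C i j ^ 2
      = ∑ i : Fin (4 * l), ∑ j ∈ range (2 * l * 2), cos ((i : ℝ) * θ - j * θ) ^ 2 := by
        refine sum_congr rfl fun i _ => ?_
        rw [show 2 * l * 2 = 4 * l by ring, ← Fin.sum_univ_eq_sum_range]
        simp [hC, hγ, sub_mul]
    _ = ∑ _i : Fin (4 * l), (l * (2 : ℕ) : ℝ) :=
        sum_congr rfl fun i _ => sum_range_cos_sub_mul_sq hθ _ 2
    _ = 8 * (l : ℝ) ^ 2 := by
        simp only [sum_const, card_univ, Fintype.card_fin, nsmul_eq_mul]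
        push_cast
        ring

theorem toeplitz_frobenius (k l : ℕ) (hk : 0 < k) (hkl : k < l) (hpar : Odd (k + l))
    (b : ℝ) (hb : b = 2 * Real.sin ((k : ℝ) / l * (Real.pi / 2)))
    (γ : ℤ → ℝ)
    (hrec : ∀ m : ℤ, γ (m + 1) = b * γ m - γ (m - 1))
    (hsym : ∀ m : ℤ, γ (-m) = γ m)
    (h0 : γ 0 = 1)
    (C : Matrix (Fin (4 * l)) (Fin (4 * l)) ℝ)
    (hC : ∀ i j : Fin (4 * l), C i j = γ ((i : ℤ) - (j : ℤ))) :
    ∑ i : Fin (4 * l), ∑ j : Fin (4 * l), (C i j) ^ 2 = 8 * (l : ℝ) ^ 2 :=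
  toeplitz_frobenius_general k l hkl hpar b hb γ hrec hsym h0 C hC
end

section
/- Let b = 2 sin(r·π/2) with r ∈ (0,1) irrational, and let γ be the symmetric solution of γ(m+1) = bγ(m) − γ(m−1) with γ(0) = 1. Then for any M ≥ 0, the set {γ(M + m) : m ≥ 0} is dense in [−1, 1]. -/
noncomputable def gammaA (A : ℝ) : ℤ → ℝ := fun m =>
  if Even m then (-1 : ℝ) ^ (m / 2) * Real.cos (m * A)
  else (-1 : ℝ) ^ ((m - 1) / 2) * Real.sin (m * A)

/-!
Along the subsequence `m = 4n` the signs disappear and `γ(4n) = cos(2π n r)`. Since `r` is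
irrational, the rotation by `r` on `ℝ/ℤ` has dense forward orbits, even after discarding any
finite initial segment, and `cos(2π ·)` maps `ℝ/ℤ` continuously onto `[-1, 1]`.
-/

open Filter Set Real

theorem dense_image_nsmul_Ici_of_denseRange_zsmul {G : Type*} [AddGroup G] [TopologicalSpace G]
    [CompactSpace G] [IsTopologicalAddGroup G] {y : G} (hy : DenseRange (· • y : ℤ → G))
    (N : ℕ) : Dense ((· • y : ℕ → G) '' Ici N) := by
  intro x
  have hcluster : MapClusterPt x atTop (· • y : ℕ → G) :=
    ((mapClusterPt_atTop_nsmul_tfae x y).out 0 3).2 (hy x)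
  rw [mem_closure_iff_clusterPt]
  exact ClusterPt.mono hcluster (le_principal_iff.2 (image_mem_map (Ici_mem_atTop N)))

namespace AddCircle

noncomputable def cosTwoPi (x : AddCircle (1 : ℝ)) : ℝ :=
  (toCircle x : ℂ).re

theorem continuous_cosTwoPi : Continuous cosTwoPi :=
  Complex.continuous_re.comp (continuous_subtype_val.comp continuous_toCircle)

theorem cosTwoPi_coe (t : ℝ) : cosTwoPi t = cos (2 * π * t) := by
  rw [cosTwoPi, toCircle_apply_mk, Circle.coe_exp, div_one]
  exact_mod_cast Complex.exp_ofReal_mul_I_re (2 * π * t)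

theorem Icc_subset_range_cosTwoPi : Icc (-1 : ℝ) 1 ⊆ range cosTwoPi := by
  intro y hy
  refine ⟨(arccos y / (2 * π) : ℝ), ?_⟩
  rw [cosTwoPi_coe, mul_div_cancel₀ _ (by positivity), cos_arccos hy.1 hy.2]

end AddCircle

theorem Irrational.Icc_subset_closure_cos_nat_mul {α : ℝ} (hα : Irrational α) (N : ℕ) :
    Icc (-1 : ℝ) 1 ⊆ closure ((fun n : ℕ => cos (2 * π * (n * α))) '' Ici N) := by
  have hdense : Dense ((· • (α : AddCircle (1 : ℝ)) : ℕ → AddCircle (1 : ℝ)) '' Ici N) :=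
    dense_image_nsmul_Ici_of_denseRange_zsmul
      (AddCircle.denseRange_zsmul_coe_iff.2 (by rwa [div_one])) N
  calc Icc (-1 : ℝ) 1 ⊆ AddCircle.cosTwoPi '' closure _ := by
        rw [hdense.closure_eq, image_univ]; exact AddCircle.Icc_subset_range_cosTwoPi
    _ ⊆ closure (AddCircle.cosTwoPi '' _) := image_closure_subset_closure_image
        AddCircle.continuous_cosTwoPi
    _ = closure ((fun n : ℕ => cos (2 * π * (n * α))) '' Ici N) := by
        rw [image_image]
        simp only [← AddCircle.coe_nsmul, nsmul_eq_mul, AddCircle.cosTwoPi_coe]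

theorem gammaA_four_mul (A : ℝ) (n : ℤ) : gammaA A (4 * n) = cos (4 * n * A) := by
  have heven : Even (4 * n) := ⟨2 * n, by ring⟩
  have hsign : (-1 : ℝ) ^ (4 * n / 2) = 1 := by
    rw [show 4 * n / 2 = 2 * n by omega, zpow_mul]; norm_num
  simp [gammaA, heven, hsign]

theorem gamma_dense_general (r : ℝ) (hirr : Irrational r)
    (A : ℝ) (hA : A = r * (Real.pi / 2)) (M : ℤ) :
    Set.Icc (-1 : ℝ) 1 ⊆
      closure {x : ℝ | ∃ m : ℤ, 0 ≤ m ∧ x = gammaA A (M + m)} := by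
  refine (hirr.Icc_subset_closure_cos_nat_mul M.toNat).trans (closure_mono ?_)
  rintro _ ⟨n, hn, rfl⟩
  refine ⟨4 * n - M, by simp only [mem_Ici] at hn; omega, ?_⟩
  rw [add_sub_cancel, gammaA_four_mul, hA]
  push_cast
  congr 1
  ring

theorem gamma_dense (r : ℝ) (hr : r ∈ Set.Ioo (0 : ℝ) 1) (hirr : Irrational r)
    (A : ℝ) (hA : A = r * (Real.pi / 2)) (M : ℤ) (hM : 0 ≤ M) :
    Set.Icc (-1 : ℝ) 1 ⊆
      closure {x : ℝ | ∃ m : ℤ, 0 ≤ m ∧ x = gammaA A (M + m)} :=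
  gamma_dense_general r hirr A hA M
end

section
/- For every b ∈ [0, 2], the symmetric solution γ of γ(m+1) = bγ(m) − γ(m−1) with γ(0) = 1 is a positive semidefinite function on ℤ: for all k ∈ ℕ, all t₁,…,t_k ∈ ℤ, and all a₁,…,a_k ∈ ℝ, one has Σ_{i,j} a_i γ(t_i − t_j) a_j ≥ 0. -/
noncomputable def gammaFun (b : ℝ) : ℤ → ℝ := fun m =>
  if Even m then (-1 : ℝ) ^ (m / 2) * Real.cos (m * Real.arcsin (b / 2))
  else (-1 : ℝ) ^ ((m - 1) / 2) * Real.sin (m * Real.arcsin (b / 2))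

/-! `γ(m) = cos (m θ)` with `θ = π/2 - arcsin (b/2)`, and `(x, y) ↦ cos (x - y)` is a positive
semidefinite kernel, being the real part of `e^{ix} e^{-iy}`: the quadratic form
`∑ aᵢ aⱼ cos (xᵢ - xⱼ)` is the sum of squares `(∑ aᵢ cos xᵢ)² + (∑ aᵢ sin xᵢ)²`. -/

open Finset Real

theorem gammaFun_eq_cos (b : ℝ) (m : ℤ) :
    gammaFun b m = cos (m * (π / 2 - arcsin (b / 2))) := by
  set A := arcsin (b / 2)
  rcases Int.even_or_odd' m with ⟨n, rfl | rfl⟩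
  · have hangle : ((2 * n : ℤ) : ℝ) * (π / 2 - A) = n * π - (2 * n : ℤ) * A := by
      push_cast; ring
    rw [gammaFun, if_pos (even_two_mul n), Int.mul_ediv_cancel_left _ two_ne_zero, hangle,
      cos_int_mul_pi_sub]
  · have hangle : ((2 * n + 1 : ℤ) : ℝ) * (π / 2 - A)
        = n * π - ((2 * n + 1 : ℤ) * A - π / 2) := by
      push_cast; ring
    rw [gammaFun, if_neg (Int.not_even_iff_odd.mpr (odd_two_mul_add_one n)),
      add_sub_cancel_right, Int.mul_ediv_cancel_left _ two_ne_zero, hangle,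
      cos_int_mul_pi_sub, cos_sub_pi_div_two]

theorem sum_sum_mul_cos_sub_mul {ι : Type*} [Fintype ι] (x a : ι → ℝ) :
    ∑ i, ∑ j, a i * cos (x i - x j) * a j
      = (∑ i, a i * cos (x i)) ^ 2 + (∑ i, a i * sin (x i)) ^ 2 := by
  simp only [sq, sum_mul_sum, ← sum_add_distrib, cos_sub]
  exact sum_congr rfl fun i _ => sum_congr rfl fun j _ => by ring

theorem sum_sum_mul_cos_sub_mul_nonneg {ι : Type*} [Fintype ι] (x a : ι → ℝ) :
    0 ≤ ∑ i, ∑ j, a i * cos (x i - x j) * a j := by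
  rw [sum_sum_mul_cos_sub_mul]
  positivity

theorem gamma_posSemidef_general (b : ℝ) :
    ∀ (k : ℕ) (t : Fin k → ℤ) (a : Fin k → ℝ),
      0 ≤ ∑ i : Fin k, ∑ j : Fin k, a i * gammaFun b (t i - t j) * a j := by
  intro k t a
  simp only [gammaFun_eq_cos, Int.cast_sub, sub_mul]
  exact sum_sum_mul_cos_sub_mul_nonneg _ a

theorem gamma_posSemidef (b : ℝ) (hb : b ∈ Set.Icc (0 : ℝ) 2) :
    ∀ (k : ℕ) (t : Fin k → ℤ) (a : Fin k → ℝ),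
      0 ≤ ∑ i : Fin k, ∑ j : Fin k, a i * gammaFun b (t i - t j) * a j :=
  gamma_posSemidef_general b
end

section
/- Let γ: ℤ → ℝ satisfy γ(m+1) = bγ(m) − γ(m−1) for some b ∈ [0,2], be symmetric with γ(0) = 1, and suppose γ is an autocovariance of a process X satisfying X_t = φX_{t−1} + Z_t with φ ∈ (0,1) where Z has autocovariance r satisfying r(m) = a·γ(m) for constant a ∈ (0,1) whenever γ(m) ≠ 0. If there exist ε > 0 and M ∈ ℕ with r(m) ≤ r(0)(1 − ε) for all m ≥ M, then a contradiction follows; i.e., γ cannot satisfy the recursion. (Key step: by density/periodicity there exists m* ≥ M with γ(m*) ≥ γ(0)(1 − ε/2), whence a = r(m*)/γ(m*) ≤ r(0)(1−ε)/(γ(0)(1−ε/2)) < r(0)/γ(0) = a, contradiction.) -/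
/-!
The recursion together with `γ 0 = 1` and `γ (-1) = γ 1` forces `γ m = T_m (b / 2) = cos (m θ)`
with `θ = arccos (b / 2)`, `T_m` the Chebyshev polynomials. By Dirichlet's approximation theorem,
arbitrarily large multiples `m θ` lie arbitrarily close to `2πℤ`, so `γ m > 1 - ε` for some
`m ≥ M`, and then `r m = a γ m > a (1 - ε) = r 0 (1 - ε)`.
-/

open Real Polynomial

theorem recurrence_ext {R : Type*} [CommRing R] {c : R} {f g : ℤ → R}
    (hf : ∀ m, f (m + 1) = c * f m - f (m - 1)) (hg : ∀ m, g (m + 1) = c * g m - g (m - 1))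
    (h0 : f 0 = g 0) (h1 : f 1 = g 1) : f = g := by
  suffices h : ∀ m, f m = g m ∧ f (m + 1) = g (m + 1) from funext fun m ↦ (h m).1
  intro m
  induction m using Int.induction_on with
  | zero => exact ⟨h0, by simpa using h1⟩
  | succ i ih => exact ⟨ih.2, by rw [hf, hg, add_sub_cancel_right, ih.1, ih.2]⟩
  | pred i ih =>
    refine ⟨?_, by rw [sub_add_cancel]; exact ih.1⟩
    linear_combination hf (-i) - hg (-i) - ih.2 + c * ih.1

theorem eq_chebyshev_T_eval_of_recurrence {b : ℝ} {γ : ℤ → ℝ}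
    (hrec : ∀ m, γ (m + 1) = b * γ m - γ (m - 1)) (hsym : ∀ m, γ (-m) = γ m) (h0 : γ 0 = 1)
    (m : ℤ) : γ m = (Chebyshev.T ℝ m).eval (b / 2) := by
  have h1 : γ 1 = b / 2 := by
    have := hrec 0
    rw [zero_sub, hsym, h0, zero_add] at this
    linarith
  refine congrFun (recurrence_ext (g := fun m ↦ (Chebyshev.T ℝ m).eval (b / 2)) hrec (fun m ↦ ?_)
    (by simpa using h0) (by simpa using h1)) m
  simp only [Chebyshev.T_add_one, eval_sub, eval_mul, eval_ofNat, eval_X]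
  ring

theorem eq_cos_int_mul_arccos_of_recurrence {b : ℝ} (hb : b ∈ Set.Icc (-2) 2) {γ : ℤ → ℝ}
    (hrec : ∀ m, γ (m + 1) = b * γ m - γ (m - 1)) (hsym : ∀ m, γ (-m) = γ m) (h0 : γ 0 = 1)
    (m : ℤ) : γ m = cos (m * arccos (b / 2)) := by
  have hcos : cos (arccos (b / 2)) = b / 2 := cos_arccos (by linarith [hb.1]) (by linarith [hb.2])
  have hT := Chebyshev.T_real_cos (arccos (b / 2)) m
  rw [hcos] at hT
  rw [eq_chebyshev_T_eval_of_recurrence hrec hsym h0, hT]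

theorem exists_int_ge_abs_mul_sub_int_lt (ξ : ℝ) (N : ℕ) {η : ℝ} (hη : 0 < η) :
    ∃ m j : ℤ, N ≤ m ∧ |m * ξ - j| < η := by
  set n := ⌈(N + 1) / η⌉₊
  have hn : 0 < n := Nat.ceil_pos.2 (by positivity)
  obtain ⟨j, k, hk, -, hkj⟩ := exists_int_int_abs_mul_sub_le ξ hn
  refine ⟨(N + 1) * k, (N + 1) * j, by nlinarith, ?_⟩
  have hN : (N + 1 : ℝ) / η < n + 1 := (Nat.le_ceil _).trans_lt (lt_add_one _)
  calc |(((N + 1) * k : ℤ) : ℝ) * ξ - ((N + 1) * j : ℤ)| = (N + 1) * |k * ξ - j| := by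
        push_cast
        rw [mul_assoc, ← mul_sub, abs_mul, abs_of_pos (by positivity)]
    _ ≤ (N + 1) * (1 / (n + 1)) := by gcongr
    _ < η := by
        rw [div_lt_iff₀ hη] at hN
        rw [mul_one_div, div_lt_iff₀ (by positivity)]
        linarith

theorem exists_int_ge_one_sub_lt_cos_int_mul (θ : ℝ) (N : ℕ) {δ : ℝ} (hδ : 0 < δ) :
    ∃ m : ℤ, N ≤ m ∧ 1 - δ < cos (m * θ) := by
  obtain ⟨m, j, hNm, hmj⟩ := exists_int_ge_abs_mul_sub_int_lt (θ / (2 * π)) N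
    (div_pos hδ two_pi_pos)
  refine ⟨m, hNm, ?_⟩
  have hdist : |m * θ - j * (2 * π)| < δ := by
    have h : m * θ - j * (2 * π) = (m * (θ / (2 * π)) - j) * (2 * π) := by
      field_simp
    rwa [h, abs_mul, abs_of_pos two_pi_pos, ← lt_div_iff₀ two_pi_pos]
  have := abs_cos_sub_cos_le (m * θ) (j * (2 * π))
  rw [cos_int_mul_two_pi] at this
  linarith [neg_abs_le (cos (m * θ) - 1)]

theorem no_recursion_under_decay (b : ℝ) (hb : b ∈ Set.Icc (0 : ℝ) 2)
    (γ r : ℤ → ℝ)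
    (hrec : ∀ m : ℤ, γ (m + 1) = b * γ m - γ (m - 1))
    (hsym : ∀ m : ℤ, γ (-m) = γ m)
    (h0 : γ 0 = 1)
    (a : ℝ) (ha : a ∈ Set.Ioo (0 : ℝ) 1)
    (hratio : ∀ m : ℤ, γ m ≠ 0 → r m = a * γ m)
    (ε : ℝ) (hε : 0 < ε) (M : ℕ)
    (hdecay : ∀ m : ℤ, (M : ℤ) ≤ m → r m ≤ r 0 * (1 - ε)) :
    False := by
  obtain ⟨m, hMm, hm⟩ :=
    exists_int_ge_one_sub_lt_cos_int_mul (arccos (b / 2)) M (lt_min hε one_pos)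
  rw [← eq_cos_int_mul_arccos_of_recurrence ⟨by linarith [hb.1], hb.2⟩ hrec hsym h0] at hm
  have hγm : 1 - ε < γ m ∧ 0 < γ m :=
    ⟨by linarith [min_le_left ε 1], by linarith [min_le_right ε 1]⟩
  have hr0 : r 0 = a := by simpa [h0] using hratio 0 (by simp [h0])
  have hrm := hdecay m hMm
  rw [hratio m hγm.2.ne', hr0] at hrm
  nlinarith [ha.1]
end
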